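/- arXiv:1508.00467 — 2 statements merged into one kernel-verified Lean document; each statement's English description precedes it below -/
import Mathlib

section
/- Let X be monotonically retractable, witnessed by assignments A ↦ r_A (continuous retractions) and A ↦ N(A) (ω-monotone networks). Then for every countable A ⊆ X and every nonempty closed F ⊆ X there exists a countable B ⊆ X with A ⊆ B and r_B(F) ⊆ F. -/
open Filter Topology Set

universe u v

/-- `[X]^{≤ω}`: the countable subsets of `X`, ordered by inclusion. -/
abbrev CtbSet (X : Type*) := {A : Set X // A.Countable}

/-- A map between families of countable sets is `ω`-monotone if it is monotone with respect to
inclusion and preserves unions of increasing `ω`-chains. -/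
def OmegaMonotone {X Y : Type*} (φ : CtbSet X → CtbSet Y) : Prop :=
  (∀ A B : CtbSet X, A.1 ⊆ B.1 → (φ A).1 ⊆ (φ B).1) ∧
  ∀ (A : ℕ → CtbSet X) (B : CtbSet X), (∀ n, (A n).1 ⊆ (A (n + 1)).1) →
    B.1 = ⋃ n, (A n).1 → (φ B).1 = ⋃ n, (φ (A n)).1

/-- An assignment of sets indexed by a poset `Γ` is `ω`-monotone if it is order preserving and
sends suprema of increasing `ω`-chains to the union of the images. -/
def OmegaMonotoneIdx {Γ Y : Type*} [Preorder Γ] (D : Γ → Set Y) : Prop :=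
  (∀ s t : Γ, s ≤ t → D s ⊆ D t) ∧
  ∀ (s : ℕ → Γ) (t : Γ), Monotone s → IsLUB (Set.range s) t → D t = ⋃ n, D (s n)

/-- `N` is a network of the map `f`. -/
def IsNetworkOfMap {X Y : Type*} [TopologicalSpace Y] (N : Set (Set X)) (f : X → Y) : Prop :=
  ∀ x : X, ∀ U : Set Y, IsOpen U → f x ∈ U → ∃ M ∈ N, x ∈ M ∧ f '' M ⊆ U

/-- `q : X → Y` is an `ℝ`-quotient map. -/
def RQuotient {X Y : Type*} [TopologicalSpace X] [TopologicalSpace Y] (q : X → Y) : Prop :=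
  Continuous q ∧ Function.Surjective q ∧ ∀ g : Y → ℝ, Continuous (g ∘ q) → Continuous g

/-- The family `r` of retractions indexed by `Γ` is an `r`-skeleton on `X`. -/
structure IsRSkeleton {X : Type*} [TopologicalSpace X] {Γ : Type*} [PartialOrder Γ]
    (r : Γ → X → X) : Prop where
  directed : ∀ s t : Γ, ∃ u, s ≤ u ∧ t ≤ u
  sigma : ∀ s : ℕ → Γ, Monotone s → ∃ t, IsLUB (Set.range s) t
  cont : ∀ s, Continuous (r s)
  retract : ∀ s x, r s (r s x) = r s x
  cosmic : ∀ s, ∃ N : Set (Set X), N.Countable ∧ (∀ M ∈ N, M ⊆ Set.range (r s)) ∧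
    ∀ x ∈ Set.range (r s), ∀ U : Set X, IsOpen U → x ∈ U → ∃ M ∈ N, x ∈ M ∧ M ⊆ U
  comm₁ : ∀ s t : Γ, s ≤ t → ∀ x, r s (r t x) = r s x
  comm₂ : ∀ s t : Γ, s ≤ t → ∀ x, r t (r s x) = r s x
  chain : ∀ (s : ℕ → Γ) (t : Γ), Monotone s → IsLUB (Set.range s) t →
    ∀ x, Tendsto (fun n => r (s n) x) atTop (𝓝 (r t x))
  toId : ∀ x : X, Tendsto (fun s : Γ => r s x) atTop (𝓝 x)

def IsFullRSkeleton {X : Type*} [TopologicalSpace X] {Γ : Type*} [PartialOrder Γ]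
    (r : Γ → X → X) : Prop :=
  IsRSkeleton r ∧ ∀ x : X, ∃ s : Γ, x ∈ Set.range (r s)

def HasFullRSkeleton (X : Type u) [TopologicalSpace X] : Prop :=
  ∃ (Γ : Type u) (inst : PartialOrder Γ) (r : Γ → X → X), @IsFullRSkeleton X _ Γ inst r

/-- A strong `r`-skeleton: an `r`-skeleton such that for every index `s`, every `n` and every
closed subset `F` of `X^n` there is `t ≥ s` whose `n`-th power maps `F` into itself. -/
def IsStrongRSkeleton {X : Type*} [TopologicalSpace X] {Γ : Type*} [PartialOrder Γ]
    (r : Γ → X → X) : Prop :=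
  IsRSkeleton r ∧ ∀ (s : Γ) (n : ℕ) (F : Set (Fin n → X)), IsClosed F →
    ∃ t : Γ, s ≤ t ∧ (fun (v : Fin n → X) (i : Fin n) => r t (v i)) '' F ⊆ F

def HasStrongRSkeleton (X : Type u) [TopologicalSpace X] : Prop :=
  ∃ (Γ : Type u) (inst : PartialOrder Γ) (r : Γ → X → X), @IsStrongRSkeleton X _ Γ inst r

/-- A `q`-skeleton on `X` indexed by the up-directed σ-complete poset `Γ`. -/
structure QSkeleton (X : Type u) [TopologicalSpace X] (Γ : Type v) [PartialOrder Γ] where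
  Xs : Γ → Type u
  top : ∀ s, TopologicalSpace (Xs s)
  q : ∀ s, X → Xs s
  D : Γ → Set X
  directed : ∀ s t : Γ, ∃ u, s ≤ u ∧ t ≤ u
  sigma : ∀ s : ℕ → Γ, Monotone s → ∃ t, IsLUB (Set.range s) t
  rquot : ∀ s, @RQuotient X (Xs s) _ (top s) (q s)
  D_ctble : ∀ s, (D s).Countable
  dense : ∀ s, @Dense (Xs s) (top s) (q s '' D s)
  proj : ∀ s t : Γ, s ≤ t → ∃ p : Xs t → Xs s, @Continuous _ _ (top t) (top s) p ∧
    Function.Surjective p ∧ ∀ x, q s x = p (q t x)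
  Dmono : OmegaMonotoneIdx D

/-- The `q`-skeleton is full: `C_p(X) = ⋃_s q_s^*(C_p(X_s))`. -/
def QSkeleton.Full {X : Type u} [TopologicalSpace X] {Γ : Type v} [PartialOrder Γ]
    (S : QSkeleton X Γ) : Prop :=
  ∀ f : X → ℝ, Continuous f →
    ∃ (s : Γ) (g : S.Xs s → ℝ), @Continuous _ _ (S.top s) _ g ∧ f = g ∘ S.q s

def HasFullQSkeleton (X : Type u) [TopologicalSpace X] : Prop :=
  ∃ (Γ : Type u) (inst : PartialOrder Γ) (S : @QSkeleton X _ Γ inst), S.Full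

/-- `C_p(X)`: continuous real-valued functions with the topology of pointwise convergence. -/
abbrev Cp (X : Type u) [TopologicalSpace X] : Type u := {f : X → ℝ // Continuous f}

/-- The diagonal map `Δ_A : X → ℝ^A` of a set `A ⊆ C_p(X)`. -/
def cpDiag {X : Type u} [TopologicalSpace X] (A : Set (Cp X)) (x : X) : ↥A → ℝ :=
  fun f => f.1.1 x

/-- The topology of the Alexandroff duplicate on `X × Bool`. -/
def ADTopology (X : Type*) [TopologicalSpace X] : TopologicalSpace (X × Bool) where
  IsOpen V := ∀ p ∈ V, p.2 = false →
    ∃ U : Set X, IsOpen U ∧ p.1 ∈ U ∧ {q : X × Bool | q.1 ∈ U ∧ q ≠ (p.1, true)} ⊆ V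
  isOpen_univ := fun p _ _ => ⟨Set.univ, isOpen_univ, trivial, fun _ _ => trivial⟩
  isOpen_inter := fun A B hA hB p hp hb => by
    obtain ⟨U, hU, hxU, hUA⟩ := hA p hp.1 hb
    obtain ⟨W, hW, hxW, hWB⟩ := hB p hp.2 hb
    exact ⟨U ∩ W, hU.inter hW, ⟨hxU, hxW⟩,
      fun q hq => ⟨hUA ⟨hq.1.1, hq.2⟩, hWB ⟨hq.1.2, hq.2⟩⟩⟩
  isOpen_sUnion := fun S hS p hp hb => by
    obtain ⟨V, hV, hpV⟩ := hp
    obtain ⟨U, hU, hxU, hUV⟩ := hS V hV p hpV hb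
    exact ⟨U, hU, hxU, fun q hq => ⟨V, hV, hUV hq⟩⟩

/-- The Alexandroff duplicate of `X`. -/
def AD (X : Type u) [TopologicalSpace X] : Type u := X × Bool

instance (X : Type u) [TopologicalSpace X] : TopologicalSpace (AD X) := ADTopology X

/-- A compact Hausdorff space is Corson compact if it embeds into a Σ-product of real lines. -/
def IsCorsonCompact (X : Type u) [TopologicalSpace X] : Prop :=
  CompactSpace X ∧ T2Space X ∧ ∃ (κ : Type u) (e : X → κ → ℝ),
    IsEmbedding e ∧ ∀ x, {i | e x i ≠ 0}.Countable

/-- The assignments `r`, `N` witness that `X` is monotonically retractable. -/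
structure MonRetractableWitness (X : Type u) [TopologicalSpace X]
    (r : CtbSet X → X → X) (N : CtbSet X → CtbSet (Set X)) : Prop where
  cont : ∀ A, Continuous (r A)
  retract : ∀ A x, r A (r A x) = r A x
  sub : ∀ A : CtbSet X, A.1 ⊆ Set.range (r A)
  network : ∀ A, IsNetworkOfMap (N A).1 (r A)
  mono : OmegaMonotone N

def MonotonicallyRetractable (X : Type u) [TopologicalSpace X] : Prop :=
  ∃ (r : CtbSet X → X → X) (N : CtbSet X → CtbSet (Set X)), MonRetractableWitness X r N

/-- `X` is monotonically `ω`-stable. -/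
def MonotonicallyOmegaStable (X : Type u) [TopologicalSpace X] : Prop :=
  ∃ N : CtbSet (Cp X) → CtbSet (Set X), OmegaMonotone N ∧
    ∀ A : CtbSet (Cp X), IsNetworkOfMap (N A).1 (cpDiag (closure A.1))

/-- A subset `K` is countably compact: every countable open cover of `K` has a finite subcover. -/
def IsCountablyCompactSet {X : Type*} [TopologicalSpace X] (K : Set X) : Prop :=
  ∀ U : ℕ → Set X, (∀ n, IsOpen (U n)) → K ⊆ ⋃ n, U n → ∃ t : Finset ℕ, K ⊆ ⋃ n ∈ t, U n

/-- The closure of `A` under `φ`. -/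
def phiBar {X : Type*} (φ : CtbSet X → CtbSet X) (A : CtbSet X) : Set X :=
  ⋂₀ {B : Set X | ∃ hB : B.Countable, A.1 ⊆ B ∧ (φ ⟨B, hB⟩).1 ⊆ B}

/-- The iterates `φ_n` of `φ`: `φ_0(A) = A`, `φ_{n+1}(A) = φ_n(A) ∪ φ(φ_n(A))`. -/
def phiIter {X : Type*} (φ : CtbSet X → CtbSet X) : ℕ → CtbSet X → CtbSet X
  | 0, A => A
  | n + 1, A => ⟨(phiIter φ n A).1 ∪ (φ (phiIter φ n A)).1,
      (phiIter φ n A).2.union (φ (phiIter φ n A)).2⟩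

theorem monRetractable_retraction_into_closed {X : Type u} [TopologicalSpace X] [T35Space X]
    (r : CtbSet X → X → X) (N : CtbSet X → CtbSet (Set X))
    (h : MonRetractableWitness X r N) :
    ∀ A : CtbSet X, ∀ F : Set X, IsClosed F → F.Nonempty →
      ∃ B : CtbSet X, A.1 ⊆ B.1 ∧ r B '' F ⊆ F := by
  intro A F hF hFne
  classical
  -- choice function: a point of M ∩ F when nonempty
  set c : Set X → X := fun M => if h : (M ∩ F).Nonempty then h.choose else hFne.choose with hc
  have hcmem : ∀ M : Set X, (M ∩ F).Nonempty → c M ∈ M ∩ F := by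
    intro M hM
    simp only [hc, dif_pos hM]
    exact hM.choose_spec
  -- the enlargement operator
  set g : CtbSet X → CtbSet X := fun B =>
    ⟨B.1 ∪ c '' {M ∈ (N B).1 | (M ∩ F).Nonempty},
      B.2.union (((N B).2.mono (Set.sep_subset _ _)).image c)⟩ with hg
  set An : ℕ → CtbSet X := fun n => Nat.rec A (fun _ B => g B) n with hAn
  have hchain : ∀ n, (An n).1 ⊆ (An (n + 1)).1 := fun n => Set.subset_union_left
  set B : CtbSet X := ⟨⋃ n, (An n).1, Set.countable_iUnion fun n => (An n).2⟩ with hB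
  have hNB : (N B).1 = ⋃ n, (N (An n)).1 := h.mono.2 An B hchain rfl
  refine ⟨B, Set.subset_iUnion (fun n => (An n).1) 0, ?_⟩
  rintro _ ⟨x, hxF, rfl⟩
  by_contra hout
  obtain ⟨M, hM, hxM, hMsub⟩ := h.network B x Fᶜ hF.isOpen_compl hout
  rw [hNB] at hM
  obtain ⟨_, ⟨n, rfl⟩, hMn⟩ := hM
  have hMF : (M ∩ F).Nonempty := ⟨x, hxM, hxF⟩
  have hcM := hcmem M hMF
  have hcB : c M ∈ B.1 := Set.mem_iUnion.2 ⟨n + 1, Or.inr ⟨M, ⟨hMn, hMF⟩, rfl⟩⟩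
  obtain ⟨y, hy⟩ := h.sub B hcB
  have hfix : r B (c M) = c M := by rw [← hy, h.retract]
  have : r B (c M) ∈ Fᶜ := hMsub ⟨c M, hcM.1, rfl⟩
  rw [hfix] at this
  exact this hcM.2
end

section
/- Assume φ : K → K′ is a continuous surjection with K compact, r : Y → Y is a continuous retraction, X is a closed subset of Y × K, D ⊆ X, and q = (r × φ)↾X. If p_Y(D) ⊆ r(Y) and q(D) is dense in q(X), then q : X → q(X) is an ℝ-quotient map. -/
open Filter Topology Set

universe u v

theorem rQuotient_of_product_retraction {Y K K' : Type*}
    [TopologicalSpace Y] [TopologicalSpace K] [TopologicalSpace K']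
    [T35Space Y] [T35Space K] [T35Space K'] [CompactSpace K]
    (φ : K → K') (hφc : Continuous φ) (hφs : Function.Surjective φ)
    (r : Y → Y) (hrc : Continuous r) (hrr : ∀ y, r (r y) = r y)
    (X : Set (Y × K)) (hX : IsClosed X) (D : Set (Y × K)) (hD : D ⊆ X)
    (hDr : ∀ p ∈ D, p.1 ∈ Set.range r)
    (hdense : (fun p : Y × K => (r p.1, φ p.2)) '' X ⊆
      closure ((fun p : Y × K => (r p.1, φ p.2)) '' D)) :
    RQuotient fun p : ↥X =>
      (⟨(r p.1.1, φ p.1.2), ⟨p.1, p.2, rfl⟩⟩ :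
        ↥((fun p : Y × K => (r p.1, φ p.2)) '' X)) := by
  set Q : Set (Y × K') := (fun p : Y × K => (r p.1, φ p.2)) '' X with hQdef
  set F : Y × K → Y × K' := fun p => (p.1, φ p.2) with hFdef
  have hFc : Continuous F := continuous_fst.prodMk (hφc.comp continuous_snd)
  have hFclosed : IsClosedMap F := (isProperMap_id.prodMap hφc.isProperMap).isClosedMap
  set Z : Set (Y × K') := F '' X with hZdef
  have hZclosed : IsClosed Z := hFclosed X hX
  -- π : X → Z, the restriction of F
  set π : ↥X → ↥Z := fun p => ⟨F p.1, ⟨p.1, p.2, rfl⟩⟩ with hπdef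
  have hπc : Continuous π := (hFc.comp continuous_subtype_val).subtype_mk _
  have hπs : Function.Surjective π := by
    rintro ⟨z, x, hx, rfl⟩; exact ⟨⟨x, hx⟩, rfl⟩
  have hπclosed : IsClosedMap π := by
    intro C hC
    have h1 : IsClosed (Subtype.val '' C : Set (Y × K)) :=
      hX.isClosedEmbedding_subtypeVal.isClosedMap C hC
    have h2 : IsClosed (F '' (Subtype.val '' C)) := hFclosed _ h1
    have : π '' C = Subtype.val ⁻¹' (F '' (Subtype.val '' C)) := by
      ext z; constructor
      · rintro ⟨x, hx, rfl⟩; exact ⟨x.1, ⟨x, hx, rfl⟩, rfl⟩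
      · rintro ⟨w, ⟨x, hx, rfl⟩, hz⟩
        have : π x = z := Subtype.ext hz
        exact this ▸ ⟨x, hx, rfl⟩
    rw [this]
    exact h2.preimage continuous_subtype_val
  have hπq : IsQuotientMap π := hπclosed.isQuotientMap hπc hπs
  -- Q ⊆ Z
  have hQZ : Q ⊆ Z := by
    intro z hz
    have h1 : (fun p : Y × K => (r p.1, φ p.2)) '' D ⊆ Z := by
      rintro _ ⟨d, hd, rfl⟩
      obtain ⟨y, hy⟩ := hDr d hd
      have h2 : r d.1 = d.1 := by rw [← hy, hrr]
      show (r d.1, φ d.2) ∈ Z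
      rw [h2]
      exact ⟨d, hD hd, rfl⟩
    exact hZclosed.closure_subset (closure_mono h1 (hdense hz))
  -- the three parts
  refine ⟨(((hrc.comp continuous_fst).prodMk (hφc.comp continuous_snd)).comp
    continuous_subtype_val).subtype_mk _, ?_, ?_⟩
  · rintro ⟨z, x, hx, rfl⟩; exact ⟨⟨x, hx⟩, rfl⟩
  · intro g hg
    -- define G on Z
    have memQ : ∀ z : ↥Z, (r z.1.1, z.1.2) ∈ Q := by
      rintro ⟨z, x, hx, rfl⟩; exact ⟨x, hx, rfl⟩
    set G : ↥Z → ℝ := fun z => g ⟨(r z.1.1, z.1.2), memQ z⟩ with hGdef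
    have hGπ : G ∘ π = g ∘ (fun p : ↥X =>
        (⟨(r p.1.1, φ p.1.2), ⟨p.1, p.2, rfl⟩⟩ : ↥Q)) := rfl
    have hGc : Continuous G := hπq.continuous_iff.mpr (hGπ ▸ hg)
    -- g = G ∘ inclusion
    set ι : ↥Q → ↥Z := fun w => ⟨w.1, hQZ w.2⟩ with hιdef
    have hιc : Continuous ι := continuous_subtype_val.subtype_mk _
    have : g = G ∘ ι := by
      funext w
      obtain ⟨w, x, hx, rfl⟩ := w
      simp only [hGdef, Function.comp_apply, hιdef]
      congr 1
      exact Subtype.ext (Prod.ext (hrr x.1).symm rfl)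
    rw [this]
    exact hGc.comp hιc
end
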